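/- arXiv:1106.6224 — 2 statements merged into one kernel-verified Lean document; each statement's English description precedes it below -/
import Mathlib

section
/- Welch bound: for a matrix Φ ∈ ℝ^{M×N} with N > M ≥ 1 and unit-norm columns, the coherence satisfies μ(Φ) ≥ sqrt((N−M)/(M(N−1))). -/
open Matrix Finset

/-- The coherence of a matrix with unit-norm columns: the largest absolute
inner product between two distinct columns. -/
noncomputable def coherence {M N : ℕ} (Φ : Matrix (Fin M) (Fin N) ℝ) : ℝ :=
  ⨆ p : {p : Fin N × Fin N // p.1 ≠ p.2}, |∑ k, Φ k p.1.1 * Φ k p.1.2|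

private lemma sum4_comm {α β : Type*} [Fintype α] [Fintype β] (f : α → α → β → β → ℝ) :
    ∑ i, ∑ j, ∑ k, ∑ l, f i j k l = ∑ k, ∑ l, ∑ i, ∑ j, f i j k l := by
  calc ∑ i, ∑ j, ∑ k, ∑ l, f i j k l
      = ∑ i, ∑ k, ∑ j, ∑ l, f i j k l :=
        Finset.sum_congr rfl fun i _ => Finset.sum_comm
    _ = ∑ k, ∑ i, ∑ j, ∑ l, f i j k l := Finset.sum_comm
    _ = ∑ k, ∑ i, ∑ l, ∑ j, f i j k l :=
        Finset.sum_congr rfl fun k _ => Finset.sum_congr rfl fun i _ => Finset.sum_comm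
    _ = ∑ k, ∑ l, ∑ i, ∑ j, f i j k l :=
        Finset.sum_congr rfl fun k _ => Finset.sum_comm

/-- Welch bound: for `Φ ∈ ℝ^{M×N}` with `N > M ≥ 1` and unit-norm columns,
`μ(Φ) ≥ √((N−M)/(M(N−1)))`. -/
theorem welch_bound {M N : ℕ} (hM : 1 ≤ M) (hMN : M < N)
    (Φ : Matrix (Fin M) (Fin N) ℝ) (hnorm : ∀ j, ∑ k, Φ k j ^ 2 = 1) :
    Real.sqrt (((N : ℝ) - M) / (M * ((N : ℝ) - 1))) ≤ coherence Φ := by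
  have hN2 : 2 ≤ N := lt_of_le_of_lt hM hMN
  set μ := coherence Φ with hμdef
  set G : Fin N → Fin N → ℝ := fun i j => ∑ k, Φ k i * Φ k j with hG
  set H : Fin M → Fin M → ℝ := fun k l => ∑ i, Φ k i * Φ l i with hH
  -- coherence bounds each off-diagonal entry
  have hbdd : BddAbove (Set.range fun p : {p : Fin N × Fin N // p.1 ≠ p.2} =>
      |∑ k, Φ k p.1.1 * Φ k p.1.2|) := Set.Finite.bddAbove (Set.finite_range _)
  have hle : ∀ i j : Fin N, i ≠ j → |G i j| ≤ μ := by
    intro i j hij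
    exact le_ciSup hbdd ⟨(i, j), hij⟩
  have hne01 : (⟨0, by omega⟩ : Fin N) ≠ ⟨1, by omega⟩ := by
    intro h; exact absurd (congrArg Fin.val h) (by simp)
  have hμ0 : 0 ≤ μ := le_trans (abs_nonneg _) (hle _ _ hne01)
  -- Gram diagonal is 1
  have hGdiag : ∀ i, G i i = 1 := by
    intro i
    simpa [hG, sq] using hnorm i
  -- key trace identity
  have expand : ∑ i, ∑ j, G i j ^ 2 = ∑ k, ∑ l, H k l ^ 2 := by
    simp only [hG, hH, sq, Finset.sum_mul_sum]
    calc ∑ i : Fin N, ∑ j : Fin N, ∑ k : Fin M, ∑ l : Fin M,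
            (Φ k i * Φ k j) * (Φ l i * Φ l j)
        = ∑ i : Fin N, ∑ j : Fin N, ∑ k : Fin M, ∑ l : Fin M,
            ((fun (i j : Fin N) (k l : Fin M) => (Φ k i * Φ l i) * (Φ k j * Φ l j)) i j k l) := by
          refine Finset.sum_congr rfl fun i _ => Finset.sum_congr rfl fun j _ =>
            Finset.sum_congr rfl fun k _ => Finset.sum_congr rfl fun l _ => by ring
      _ = ∑ k : Fin M, ∑ l : Fin M, ∑ i : Fin N, ∑ j : Fin N,
            (Φ k i * Φ l i) * (Φ k j * Φ l j) := sum4_comm _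
  -- trace of H is N
  have htrH : ∑ k, H k k = (N : ℝ) := by
    rw [Finset.sum_comm]
    simp only [← sq]
    simp [hnorm]
  -- Cauchy–Schwarz: N² ≤ M * ∑∑ H²
  have hCS : (N : ℝ) ^ 2 ≤ (M : ℝ) * ∑ k, ∑ l, H k l ^ 2 := by
    have h1 : (∑ k, H k k) ^ 2 ≤ (((Finset.univ : Finset (Fin M)).card : ℝ)) * ∑ k, H k k ^ 2 := by
      exact sq_sum_le_card_mul_sum_sq (s := (Finset.univ : Finset (Fin M))) (f := fun k => H k k)
    have h2 : ∑ k, H k k ^ 2 ≤ ∑ k, ∑ l, H k l ^ 2 := by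
      refine Finset.sum_le_sum fun k _ => ?_
      exact Finset.single_le_sum (f := fun l => H k l ^ 2)
        (fun l _ => sq_nonneg _) (Finset.mem_univ k)
    calc (N : ℝ) ^ 2 = (∑ k, H k k) ^ 2 := by rw [htrH]
      _ ≤ (((Finset.univ : Finset (Fin M)).card : ℝ)) * ∑ k, H k k ^ 2 := h1
      _ = (M : ℝ) * ∑ k, H k k ^ 2 := by simp
      _ ≤ (M : ℝ) * ∑ k, ∑ l, H k l ^ 2 :=
          mul_le_mul_of_nonneg_left h2 (by positivity)
  -- split diagonal and off-diagonal
  have hsplit : ∑ i, ∑ j, G i j ^ 2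
      ≤ (N : ℝ) + (N : ℝ) * (((N : ℝ) - 1) * μ ^ 2) := by
    have hrow : ∀ i : Fin N, ∑ j, G i j ^ 2 ≤ 1 + ((N : ℝ) - 1) * μ ^ 2 := by
      intro i
      rw [← Finset.sum_erase_add _ _ (Finset.mem_univ i), hGdiag i]
      have hb : ∑ j ∈ Finset.univ.erase i, G i j ^ 2
          ≤ (Finset.univ.erase i).card • (μ ^ 2) := by
        refine Finset.sum_le_card_nsmul _ _ _ fun j hj => ?_
        have hij : i ≠ j := (Finset.ne_of_mem_erase hj).symm
        calc G i j ^ 2 = |G i j| ^ 2 := (sq_abs _).symm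
          _ ≤ μ ^ 2 := pow_le_pow_left₀ (abs_nonneg _) (hle i j hij) 2
      have hcard : ((Finset.univ.erase i).card : ℝ) = (N : ℝ) - 1 := by
        rw [Finset.card_erase_of_mem (Finset.mem_univ i), Finset.card_univ,
          Fintype.card_fin, Nat.cast_sub (by omega)]
        simp
      rw [nsmul_eq_mul, hcard] at hb
      have := sq_nonneg (1:ℝ)
      linarith
    calc ∑ i, ∑ j, G i j ^ 2 ≤ ∑ _i : Fin N, (1 + ((N : ℝ) - 1) * μ ^ 2) :=
          Finset.sum_le_sum fun i _ => hrow i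
      _ = (N : ℝ) * (1 + ((N : ℝ) - 1) * μ ^ 2) := by
          rw [Finset.sum_const, Finset.card_univ, Fintype.card_fin, nsmul_eq_mul]
      _ = (N : ℝ) + (N : ℝ) * (((N : ℝ) - 1) * μ ^ 2) := by ring
  -- combine
  have hmain : (N : ℝ) ^ 2 ≤ (M : ℝ) * ((N : ℝ) + (N : ℝ) * (((N : ℝ) - 1) * μ ^ 2)) := by
    calc (N : ℝ) ^ 2 ≤ (M : ℝ) * ∑ k, ∑ l, H k l ^ 2 := hCS
      _ = (M : ℝ) * ∑ i, ∑ j, G i j ^ 2 := by rw [expand]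
      _ ≤ _ := mul_le_mul_of_nonneg_left hsplit (by positivity)
  -- final algebra
  have hm1 : (1 : ℝ) ≤ (M : ℝ) := by exact_mod_cast hM
  have hmn : (M : ℝ) + 1 ≤ (N : ℝ) := by exact_mod_cast hMN
  have hfin : ((N : ℝ) - (M : ℝ)) / ((M : ℝ) * ((N : ℝ) - 1)) ≤ μ ^ 2 := by
    rw [div_le_iff₀ (by nlinarith)]
    have hn0 : (0 : ℝ) < (N : ℝ) := by nlinarith
    nlinarith [mul_pos hn0 hn0]
  calc Real.sqrt (((N : ℝ) - M) / (M * ((N : ℝ) - 1)))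
      ≤ Real.sqrt (μ ^ 2) := Real.sqrt_le_sqrt hfin
    _ = μ := Real.sqrt_sq hμ0
end

section
/- If Φ has unit-norm columns and coherence μ = μ(Φ), then Φ satisfies the (K,δ)-restricted isometry property with constant δ = (K−1)μ; that is, for every K-sparse x, (1−(K−1)μ)‖x‖₂² ≤ ‖Φx‖₂² ≤ (1+(K−1)μ)‖x‖₂². -/
open Matrix Finset

/-- A vector is `K`-sparse if it has at most `K` nonzero entries. -/
def KSparse {N : ℕ} (K : ℕ) (x : Fin N → ℝ) : Prop :=
  (Finset.univ.filter fun i => x i ≠ 0).card ≤ K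

/-- A matrix with unit-norm columns and coherence `μ` satisfies the
`(K, (K−1)μ)`-RIP. -/
theorem coherence_rip {M N K : ℕ} (Φ : Matrix (Fin M) (Fin N) ℝ)
    (hnorm : ∀ j, ∑ k, Φ k j ^ 2 = 1) :
    ∀ x : Fin N → ℝ, KSparse K x →
      (1 - ((K : ℝ) - 1) * coherence Φ) * ∑ i, x i ^ 2 ≤ ∑ k, Φ.mulVec x k ^ 2 ∧
      ∑ k, Φ.mulVec x k ^ 2 ≤ (1 + ((K : ℝ) - 1) * coherence Φ) * ∑ i, x i ^ 2 := by
  intro x hx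
  set μ := coherence Φ with hμdef
  set G : Fin N → Fin N → ℝ := fun i j => ∑ k, Φ k i * Φ k j with hG
  have hμ_bound : ∀ i j, i ≠ j → |G i j| ≤ μ := by
    intro i j hij
    have h := le_ciSup (f := fun p : {p : Fin N × Fin N // p.1 ≠ p.2} =>
        |∑ k, Φ k p.1.1 * Φ k p.1.2|)
      (Set.Finite.bddAbove (Set.finite_range _)) ⟨(i, j), hij⟩
    simpa [hμdef, coherence, hG] using h
  have hμ0 : 0 ≤ μ := by
    rcases isEmpty_or_nonempty {p : Fin N × Fin N // p.1 ≠ p.2} with h | h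
    · rw [hμdef, coherence, Real.iSup_of_isEmpty]
    · obtain ⟨⟨⟨i, j⟩, hij⟩⟩ := h
      exact le_trans (abs_nonneg _) (hμ_bound i j hij)
  set S := ∑ i, x i ^ 2 with hS
  have hS0 : 0 ≤ S := Finset.sum_nonneg fun i _ => sq_nonneg _
  -- expansion
  have hexp : ∑ k, Φ.mulVec x k ^ 2 = ∑ i, ∑ j, x i * x j * G i j := by
    have h1 : ∀ k, Φ.mulVec x k ^ 2 = ∑ i, ∑ j, x i * x j * (Φ k i * Φ k j) := by
      intro k
      rw [Matrix.mulVec, dotProduct, sq, Finset.sum_mul_sum]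
      exact Finset.sum_congr rfl fun i _ => Finset.sum_congr rfl fun j _ => by ring
    rw [Finset.sum_congr rfl fun k _ => h1 k, Finset.sum_comm]
    refine Finset.sum_congr rfl fun i _ => ?_
    rw [Finset.sum_comm]
    refine Finset.sum_congr rfl fun j _ => ?_
    simp [hG, Finset.mul_sum]
  have hGdiag : ∀ i, G i i = 1 := by
    intro i
    simpa [hG, sq] using hnorm i
  set E := ∑ i, ∑ j ∈ Finset.univ.erase i, x i * x j * G i j with hE
  have hsplit : ∑ k, Φ.mulVec x k ^ 2 = S + E := by
    rw [hexp]
    rw [hS, hE, ← Finset.sum_add_distrib]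
    refine Finset.sum_congr rfl fun i _ => ?_
    rw [← Finset.sum_erase_add _ _ (Finset.mem_univ i), hGdiag]
    ring
  -- bound on E
  set T := ∑ i, ∑ j ∈ Finset.univ.erase i, |x i| * |x j| with hT
  have hEbound : |E| ≤ μ * T := by
    calc |E| ≤ ∑ i, |∑ j ∈ Finset.univ.erase i, x i * x j * G i j| :=
          Finset.abs_sum_le_sum_abs _ _
      _ ≤ ∑ i, ∑ j ∈ Finset.univ.erase i, |x i * x j * G i j| :=
          Finset.sum_le_sum fun i _ => Finset.abs_sum_le_sum_abs _ _
      _ ≤ ∑ i, ∑ j ∈ Finset.univ.erase i, |x i| * |x j| * μ := by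
          refine Finset.sum_le_sum fun i _ => Finset.sum_le_sum fun j hj => ?_
          rw [abs_mul, abs_mul]
          exact mul_le_mul_of_nonneg_left
            (hμ_bound i j (Finset.ne_of_mem_erase hj).symm)
            (mul_nonneg (abs_nonneg _) (abs_nonneg _))
      _ = μ * T := by
          rw [hT, Finset.mul_sum]
          refine Finset.sum_congr rfl fun i _ => ?_
          rw [Finset.mul_sum]
          exact Finset.sum_congr rfl fun j _ => by ring
  -- T ≤ (K-1) S
  have hTle : T ≤ ((K : ℝ) - 1) * S := by
    set s := Finset.univ.filter fun i => x i ≠ 0 with hs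
    have habs_sum : ∑ i, |x i| = ∑ i ∈ s, |x i| := by
      refine (Finset.sum_subset (Finset.subset_univ s) ?_).symm
      intro i _ hi
      simp [hs] at hi
      simp [hi]
    have hsq_sum : ∑ i, x i ^ 2 = ∑ i ∈ s, x i ^ 2 := by
      refine (Finset.sum_subset (Finset.subset_univ s) ?_).symm
      intro i _ hi
      simp [hs] at hi
      simp [hi]
    have hcs : (∑ i ∈ s, |x i|) ^ 2 ≤ (s.card : ℝ) * ∑ i ∈ s, |x i| ^ 2 :=
      sq_sum_le_card_mul_sum_sq
    have hcard : (s.card : ℝ) ≤ (K : ℝ) := by exact_mod_cast hx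
    have h1 : (∑ i, |x i|) ^ 2 ≤ (K : ℝ) * S := by
      rw [habs_sum, hS, hsq_sum]
      calc (∑ i ∈ s, |x i|) ^ 2 ≤ (s.card : ℝ) * ∑ i ∈ s, |x i| ^ 2 := hcs
        _ = (s.card : ℝ) * ∑ i ∈ s, x i ^ 2 := by
            simp [sq_abs]
        _ ≤ (K : ℝ) * ∑ i ∈ s, x i ^ 2 := by
            apply mul_le_mul_of_nonneg_right hcard
            exact Finset.sum_nonneg fun i _ => sq_nonneg _
    have hTeq : T = (∑ i, |x i|) ^ 2 - S := by
      rw [hT, hS, sq, Finset.sum_mul_sum, ← Finset.sum_sub_distrib]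
      refine Finset.sum_congr rfl fun i _ => ?_
      rw [← Finset.sum_erase_add _ _ (Finset.mem_univ i), ← sq, sq_abs]
      ring
    linarith
  have hE2 : |E| ≤ ((K : ℝ) - 1) * μ * S := by
    calc |E| ≤ μ * T := hEbound
      _ ≤ μ * (((K : ℝ) - 1) * S) := mul_le_mul_of_nonneg_left hTle hμ0
      _ = ((K : ℝ) - 1) * μ * S := by ring
  obtain ⟨hE3, hE4⟩ := abs_le.mp hE2
  constructor
  · rw [hsplit]; nlinarith
  · rw [hsplit]; nlinarith
end
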